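/- Let E ∈ ℝ^{n×n}, P ∈ ℝ^{n×N}, and for each j = 1, …, N let Γ_j ∈ ℝ^{n×n} be a diagonal matrix with each diagonal entry equal to 0 or 1. Let Δ ∈ ℝ^{n×N} be the matrix whose j-th column is Γ_j E P_{(·,j)}. Then ‖Δ‖_F ≤ ‖E‖_F · ‖P‖₂, where ‖·‖_F is the Frobenius norm and ‖·‖₂ is the spectral norm. -/
import Mathlib


open scoped BigOperators
open Matrix

/-- Frobenius norm of a real matrix. -/
noncomputable def frobNorm {m n : ℕ} (A : Matrix (Fin m) (Fin n) ℝ) : ℝ :=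
  Real.sqrt (∑ i, ∑ j, (A i j) ^ 2)

/-- Spectral (largest singular value / ℓ2-operator) norm of a real matrix. -/
noncomputable def specNorm {m n : ℕ} (A : Matrix (Fin m) (Fin n) ℝ) : ℝ :=
  ‖LinearMap.toContinuousLinearMap (Matrix.toEuclideanLin A)‖

/-- Euclidean (ℓ2) norm of a vector. -/
noncomputable def vecNorm {n : ℕ} (v : Fin n → ℝ) : ℝ :=
  Real.sqrt (∑ i, v i ^ 2)

/-- β(z): the smallest nonzero magnitude among the entries of `z`
(defined as `sInf` of the set of nonzero magnitudes; `0` if `z = 0`). -/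
noncomputable def beta {n : ℕ} (z : Fin n → ℝ) : ℝ :=
  sInf {r : ℝ | ∃ i, z i ≠ 0 ∧ r = |z i|}

/-- `z` is an output of the hard-thresholding operator `H_s` applied to `y`:
there is a set `T` of `min s n` indices carrying largest-magnitude entries of `y`,
such that `z` agrees with `y` on `T` and vanishes off `T`. -/
def IsHardThreshold {n : ℕ} (s : ℕ) (y z : Fin n → ℝ) : Prop :=
  ∃ T : Finset (Fin n), T.card = min s n ∧ (∀ i ∈ T, z i = y i) ∧ (∀ i ∉ T, z i = 0) ∧
    ∀ i ∈ T, ∀ j ∉ T, |y j| ≤ |y i|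

/-- `A = U * S * Vᵀ` is a full singular value decomposition of `A`:
`U, V` orthogonal and `S` diagonal with nonnegative entries. -/
def IsFullSVD {n : ℕ} (A U S V : Matrix (Fin n) (Fin n) ℝ) : Prop :=
  Uᵀ * U = 1 ∧ Vᵀ * V = 1 ∧ (∀ i j, i ≠ j → S i j = 0) ∧ (∀ i, 0 ≤ S i i) ∧ A = U * S * Vᵀ

/-- `W = V * Uᵀ` for some full SVD `A = U * S * Vᵀ`. -/
def IsPolarFromSVD {n : ℕ} (A W : Matrix (Fin n) (Fin n) ℝ) : Prop :=
  ∃ U S V, IsFullSVD A U S V ∧ W = V * Uᵀ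

/-- `D_k`: the n×n diagonal matrix of ones with a zero at entry (k,k). -/
noncomputable def Dmat {n : ℕ} (k : Fin n) : Matrix (Fin n) (Fin n) ℝ :=
  Matrix.diagonal (fun i => if i = k then 0 else 1)

-- `D̃_k`: the N×N diagonal matrix with ones at the support of the k-th row of `Zs`.
open Classical in
noncomputable def Dtil {n N : ℕ} (Zs : Matrix (Fin n) (Fin N) ℝ) (k : Fin n) :
    Matrix (Fin N) (Fin N) ℝ :=
  Matrix.diagonal (fun i => if Zs k i ≠ 0 then 1 else 0)

/-- `q = max_{1 ≤ k ≤ n} ‖D_k Z* D̃_k‖₂`. -/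
noncomputable def qZero {n N : ℕ} (Zs : Matrix (Fin n) (Fin N) ℝ) : ℝ :=
  ⨆ k, specNorm (Dmat k * Zs * Dtil Zs k)

/-- Smallest singular value of an n×N matrix: `min_{‖x‖=1, x ∈ ℝⁿ} ‖Aᵀ x‖`. -/
noncomputable def sigmaMin {n N : ℕ} (A : Matrix (Fin n) (Fin N) ℝ) : ℝ :=
  sInf {r : ℝ | ∃ x : EuclideanSpace ℝ (Fin n), ‖x‖ = 1 ∧ r = ‖Matrix.toEuclideanLin Aᵀ x‖}

/-- Condition number κ(A): ratio of largest to smallest singular value. -/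
noncomputable def condNumber {n N : ℕ} (A : Matrix (Fin n) (Fin N) ℝ) : ℝ :=
  specNorm A / sigmaMin A

/-- `q = κ⁴(Z*) · max_{1 ≤ k ≤ n} ‖D_k Z* Z*ᵀ Z* D̃_k‖₂`. -/
noncomputable def qGen {n N : ℕ} (Zs : Matrix (Fin n) (Fin N) ℝ) : ℝ :=
  condNumber Zs ^ 4 * ⨆ k, specNorm (Dmat k * Zs * Zsᵀ * Zs * Dtil Zs k)

open scoped Matrix.Norms.L2Operator in
private lemma specNorm_eq_l2 {m n : ℕ} (A : Matrix (Fin m) (Fin n) ℝ) : specNorm A = ‖A‖ := rfl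

lemma specNorm_nonneg {m n : ℕ} (A : Matrix (Fin m) (Fin n) ℝ) : 0 ≤ specNorm A :=
  norm_nonneg _

open scoped Matrix.Norms.L2Operator in
lemma stmt5_key {n N : ℕ} (P : Matrix (Fin n) (Fin N) ℝ) (v : Fin n → ℝ) :
    ∑ j, (Pᵀ.mulVec v j) ^ 2 ≤ specNorm P ^ 2 * ∑ k, v k ^ 2 := by
  have h := Matrix.l2_opNorm_mulVec Pᵀ ((EuclideanSpace.equiv (Fin n) ℝ).symm v)
  have hT : (Pᵀ : Matrix (Fin N) (Fin n) ℝ) = Pᴴ := by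
    ext i j; simp [Matrix.conjTranspose_apply]
  rw [hT, Matrix.l2_opNorm_conjTranspose] at h
  have hnorm1 : ‖(EuclideanSpace.equiv (Fin N) ℝ).symm (Pᴴ *ᵥ (EuclideanSpace.equiv (Fin n) ℝ).symm v)‖
      = Real.sqrt (∑ j, (Pᵀ.mulVec v j) ^ 2) := by
    rw [EuclideanSpace.norm_eq]
    congr 1
    refine Finset.sum_congr rfl fun j _ => ?_
    rw [← hT]
    rw [Real.norm_eq_abs, sq_abs]
    rfl
  have hnorm2 : ‖(EuclideanSpace.equiv (Fin n) ℝ).symm v‖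
      = Real.sqrt (∑ k, v k ^ 2) := by
    rw [EuclideanSpace.norm_eq]
    simp [Real.norm_eq_abs, sq_abs]
  rw [hnorm1, hnorm2] at h
  calc ∑ j, (Pᵀ.mulVec v j) ^ 2
      = Real.sqrt (∑ j, (Pᵀ.mulVec v j) ^ 2) ^ 2 := by
        rw [Real.sq_sqrt (Finset.sum_nonneg fun j _ => sq_nonneg _)]
    _ ≤ (‖P‖ * Real.sqrt (∑ k, v k ^ 2)) ^ 2 := by
        exact pow_le_pow_left₀ (Real.sqrt_nonneg _) h 2
    _ = specNorm P ^ 2 * ∑ k, v k ^ 2 := by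
        rw [mul_pow, Real.sq_sqrt (Finset.sum_nonneg fun k _ => sq_nonneg _)]; rfl

/-- `‖Δ‖_F ≤ ‖E‖_F ‖P‖₂` when the j-th column of Δ is `Γ_j E P_{(·,j)}`
with `Γ_j` diagonal 0/1 matrices. -/
theorem stmt5
    {n N : ℕ} (E : Matrix (Fin n) (Fin n) ℝ) (P : Matrix (Fin n) (Fin N) ℝ)
    (γ : Fin N → Fin n → ℝ)
    (hγ : ∀ j i, γ j i = 0 ∨ γ j i = 1)
    (Δ : Matrix (Fin n) (Fin N) ℝ)
    (hΔ : ∀ i j, Δ i j = γ j i * (E.mulVec (fun k => P k j)) i) :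
    frobNorm Δ ≤ frobNorm E * specNorm P := by
  have hEP : ∀ i j, Δ i j ^ 2 ≤ ((Pᵀ.mulVec (fun k => E i k)) j) ^ 2 := by
    intro i j
    have h1 : (Pᵀ.mulVec (fun k => E i k)) j = (E.mulVec (fun k => P k j)) i := by
      simp [Matrix.mulVec, dotProduct, Matrix.transpose_apply, mul_comm]
    rw [hΔ i j, ← h1]
    rcases hγ j i with h | h <;> simp [h, mul_pow]
    positivity
  have hsum : ∑ i, ∑ j, Δ i j ^ 2 ≤ specNorm P ^ 2 * ∑ i, ∑ k, E i k ^ 2 := by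
    rw [Finset.mul_sum]
    refine Finset.sum_le_sum fun i _ => ?_
    calc ∑ j, Δ i j ^ 2
        ≤ ∑ j, ((Pᵀ.mulVec (fun k => E i k)) j) ^ 2 :=
          Finset.sum_le_sum fun j _ => hEP i j
      _ ≤ specNorm P ^ 2 * ∑ k, E i k ^ 2 := stmt5_key P _
  unfold frobNorm
  calc Real.sqrt (∑ i, ∑ j, Δ i j ^ 2)
      ≤ Real.sqrt (specNorm P ^ 2 * ∑ i, ∑ k, E i k ^ 2) := Real.sqrt_le_sqrt hsum
    _ = specNorm P * Real.sqrt (∑ i, ∑ k, E i k ^ 2) := by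
        rw [Real.sqrt_mul (sq_nonneg _), Real.sqrt_sq (specNorm_nonneg _)]
    _ = Real.sqrt (∑ i, ∑ j, E i j ^ 2) * specNorm P := mul_comm _ _
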